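/- For the amplitude damping Kraus family at ω = 0 with 0 < p < 1 — K₁ = diag(1, √(1−p)), K₂ = √p·E₀₁, with derivative family K̇₁ = diag(−i/2, (i/2)√(1−p)), K̇₂ = (i/2)√p·E₀₁, where E₀₁ is the matrix unit with 1 in row 0, column 1 — the following hold: (a) for a 2×2 Hermitian matrix h, β(h) = 0 if and only if h = diag(−1/2, (2−p)/(2p)); (b) for that unique h, α(h) = ((1−p)/p)·E₁₁ where E₁₁ = diag(0,1); (c) consequently the minimum over Hermitian h with β(h) = 0 of 4‖α(h)‖ equals 4(1−p)/p. -/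

import Mathlib

open Matrix

/-- The ℓ²→ℓ² operator norm (largest singular value) of a complex matrix. -/
noncomputable def opNorm {m n : Type*} [Fintype m] [Fintype n] [DecidableEq n]
    (A : Matrix m n ℂ) : ℝ :=
  ‖LinearMap.toContinuousLinearMap (Matrix.toEuclideanLin A)‖

/-- `α(h) = ∑_i (K̇_i − i ∑_j h_{ij} K_j)† (K̇_i − i ∑_j h_{ij} K_j)`. -/
noncomputable def krausAlpha {d d' r : ℕ} (K Kd : Fin r → Matrix (Fin d') (Fin d) ℂ)
    (h : Matrix (Fin r) (Fin r) ℂ) : Matrix (Fin d) (Fin d) ℂ :=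
  ∑ i, (Kd i - Complex.I • ∑ j, h i j • K j)ᴴ * (Kd i - Complex.I • ∑ j, h i j • K j)

/-- `β(h) = H + ∑_{i,j} h_{ij} K_i† K_j` where `H = i ∑_i K_i† K̇_i`. -/
noncomputable def krausBeta {d d' r : ℕ} (K Kd : Fin r → Matrix (Fin d') (Fin d) ℂ)
    (h : Matrix (Fin r) (Fin r) ℂ) : Matrix (Fin d) (Fin d) ℂ :=
  (Complex.I • ∑ i, (K i)ᴴ * Kd i) + ∑ i, ∑ j, h i j • ((K i)ᴴ * K j)

/-- Amplitude damping Kraus family at `ω = 0`: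
`K₁ = diag(1, √(1−p))`, `K₂ = √p·E₀₁`. -/
noncomputable def adK (p : ℝ) : Fin 2 → Matrix (Fin 2) (Fin 2) ℂ :=
  ![!![1, 0; 0, (Real.sqrt (1 - p) : ℂ)],
    (Real.sqrt p : ℂ) • !![0, 1; 0, 0]]

/-- Derivative family at `ω = 0`:
`K̇₁ = diag(−i/2, (i/2)√(1−p))`, `K̇₂ = (i/2)√p·E₀₁`. -/
noncomputable def adKdot (p : ℝ) : Fin 2 → Matrix (Fin 2) (Fin 2) ℂ :=
  ![!![-(Complex.I / 2), 0; 0, (Complex.I / 2) * (Real.sqrt (1 - p) : ℂ)],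
    ((Complex.I / 2) * (Real.sqrt p : ℂ)) • !![0, 1; 0, 0]]

/-!
The constraint `β(h) = 0` is affine in `h`, and for the amplitude damping family it has exactly
one solution, so the minimum in (c) is the value at that single `h`. There the residuals
`K̇ᵢ − i ∑ⱼ hᵢⱼ Kⱼ` are `i√(1−p)·E₁₁` and `i√p·(p−1)/p·E₀₁`, so `α(h)` is diagonal and its
operator norm is its largest diagonal entry.
-/

open scoped Matrix.Norms.L2Operator

lemma opNorm_diagonal {n : Type*} [Fintype n] [DecidableEq n] (v : n → ℂ) :
    opNorm (diagonal v) = ‖v‖ :=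
  l2_opNorm_diagonal v

lemma opNorm_ofReal_smul_diag_zero_one {c : ℝ} (hc : 0 ≤ c) :
    opNorm ((c : ℂ) • !![0, 0; 0, 1]) = c := by
  have hdiag : (c : ℂ) • !![(0 : ℂ), 0; 0, 1] = diagonal (Pi.single 1 (c : ℂ)) := by
    ext i j; fin_cases i <;> fin_cases j <;> simp
  rw [hdiag, opNorm_diagonal, Pi.norm_single, Complex.norm_real, Real.norm_of_nonneg hc]

lemma ofReal_sqrt_mul_self {x : ℝ} (hx : 0 ≤ x) : (√x : ℂ) * √x = x := by
  rw [← Complex.ofReal_mul, Real.mul_self_sqrt hx]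

lemma krausBeta_adK (p : ℝ) (hp0 : 0 ≤ p) (hp1 : p ≤ 1) (h : Matrix (Fin 2) (Fin 2) ℂ) :
    krausBeta (adK p) (adKdot p) h =
      !![1 / 2 + h 0 0, √p * h 0 1; √p * h 1 0, -(1 / 2) + (1 - p) * h 0 0 + p * h 1 1] := by
  have hs := ofReal_sqrt_mul_self hp0
  have ht := ofReal_sqrt_mul_self (sub_nonneg.2 hp1)
  push_cast at ht
  ext i j
  fin_cases i <;> fin_cases j <;>
    simp [krausBeta, adK, adKdot, Fin.sum_univ_two, Matrix.mul_apply]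
  · linear_combination (-1 / 2 : ℂ) * Complex.I_sq
  · ring
  · ring
  · linear_combination (Complex.I ^ 2 / 2 + h 0 0) * ht + (Complex.I ^ 2 / 2 + h 1 1) * hs
      + (1 / 2 : ℂ) * Complex.I_sq

noncomputable def adOptimalH (p : ℝ) : Matrix (Fin 2) (Fin 2) ℂ :=
  !![(-(1 / 2) : ℂ), 0; 0, (((2 - p) / (2 * p) : ℝ) : ℂ)]

lemma adOptimalH_isHermitian (p : ℝ) : (adOptimalH p).IsHermitian := by
  ext i j
  fin_cases i <;> fin_cases j <;> simp [adOptimalH]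

lemma krausBeta_adK_eq_zero_iff {p : ℝ} (hp0 : 0 < p) (hp1 : p ≤ 1)
    (h : Matrix (Fin 2) (Fin 2) ℂ) :
    krausBeta (adK p) (adKdot p) h = 0 ↔ h = adOptimalH p := by
  have hp : (p : ℂ) ≠ 0 := by exact_mod_cast hp0.ne'
  have hs : (√p : ℂ) ≠ 0 := by exact_mod_cast (Real.sqrt_pos.2 hp0).ne'
  rw [krausBeta_adK p hp0.le hp1, ← Matrix.ext_iff, adOptimalH, ← Matrix.ext_iff]
  simp only [Fin.forall_fin_two, of_apply, cons_val', cons_val_zero, cons_val_one, empty_val',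
    cons_val_fin_one, Matrix.zero_apply, mul_eq_zero, hs, false_or]
  constructor
  · rintro ⟨⟨h00, h01⟩, h10, h11⟩
    have ha : h 0 0 = -(1 / 2) := by linear_combination h00
    refine ⟨⟨ha, h01⟩, h10, ?_⟩
    rw [ha] at h11
    push_cast
    field_simp
    linear_combination 2 * h11
  · rintro ⟨⟨h00, h01⟩, h10, h11⟩
    refine ⟨⟨by rw [h00]; ring, h01⟩, h10, ?_⟩
    rw [h00, h11]
    push_cast
    field_simp
    ring

lemma krausAlpha_adK_adOptimalH {p : ℝ} (hp0 : 0 < p) (hp1 : p ≤ 1) :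
    krausAlpha (adK p) (adKdot p) (adOptimalH p) = (((1 - p) / p : ℝ) : ℂ) • !![0, 0; 0, 1] := by
  have hp : (p : ℂ) ≠ 0 := by exact_mod_cast hp0.ne'
  have hs := ofReal_sqrt_mul_self hp0.le
  have ht := ofReal_sqrt_mul_self (sub_nonneg.2 hp1)
  push_cast at ht
  ext i j
  fin_cases i <;> fin_cases j <;>
    simp [krausAlpha, adK, adKdot, adOptimalH, Fin.sum_univ_two, Matrix.mul_apply, map_ofNat]
  · right; ring
  · field_simp
    linear_combination (-4 * Complex.I ^ 2 * p ^ 2) * ht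
      + (-4 * Complex.I ^ 2 * (1 - p) ^ 2) * hs + (-4 * p * (1 - p)) * Complex.I_sq

/-- For the amplitude damping channel with `0 < p < 1`:
(a) a Hermitian `h` satisfies `β(h) = 0` iff `h = diag(−1/2, (2−p)/(2p))`;
(b) for this `h`, `α(h) = ((1−p)/p)·diag(0,1)`;
(c) the minimum of `4‖α(h)‖` over Hermitian `h` with `β(h) = 0` is `4(1−p)/p`. -/
theorem amplitude_damping_SQL (p : ℝ) (hp0 : 0 < p) (hp1 : p < 1) :
    (∀ h : Matrix (Fin 2) (Fin 2) ℂ, h.IsHermitian →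
      (krausBeta (adK p) (adKdot p) h = 0 ↔
        h = !![(-(1 / 2) : ℂ), 0; 0, (((2 - p) / (2 * p) : ℝ) : ℂ)]))
    ∧ krausAlpha (adK p) (adKdot p)
        !![(-(1 / 2) : ℂ), 0; 0, (((2 - p) / (2 * p) : ℝ) : ℂ)]
      = (((1 - p) / p : ℝ) : ℂ) • !![0, 0; 0, 1]
    ∧ IsLeast {x : ℝ | ∃ h : Matrix (Fin 2) (Fin 2) ℂ, h.IsHermitian ∧
          krausBeta (adK p) (adKdot p) h = 0 ∧
          x = 4 * opNorm (krausAlpha (adK p) (adKdot p) h)}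
        (4 * (1 - p) / p) := by
  have hbeta := krausBeta_adK_eq_zero_iff hp0 hp1.le
  have halpha := krausAlpha_adK_adOptimalH hp0 hp1.le
  have hval : 4 * opNorm (krausAlpha (adK p) (adKdot p) (adOptimalH p)) = 4 * (1 - p) / p := by
    rw [halpha, opNorm_ofReal_smul_diag_zero_one (div_nonneg (sub_nonneg.2 hp1.le) hp0.le)]
    ring
  refine ⟨fun h _ => hbeta h, halpha,
    ⟨adOptimalH p, adOptimalH_isHermitian p, (hbeta _).2 rfl, hval.symm⟩, ?_⟩
  rintro x ⟨h, -, hb, rfl⟩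
  rw [(hbeta h).1 hb, hval]
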